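/- In E = ℓ^∞, the sequence (x_n), where x_n has its first n coordinates equal to 0 and all remaining coordinates equal to 1, satisfies x_n ↓ 0 (decreasing with infimum 0), yet x_n ∉ (-e₁, e₁) for every n, where e₁ = (1,0,0,...). Hence the open order interval (-e₁, e₁) is not open in the quasi-order topology τ_o on ℓ^∞. -/

import Mathlib

universe u
variable {E : Type u} [Lattice E] [AddCommGroup E] [CovariantClass E E (· + ·) (· ≤ ·)]

/-- A net `x` order converges to `a`: there is a downward directed set `S` of upper bounds
with infimum `0` such that each `y ∈ S` eventually dominates `|x α - a|`. -/
def OrderConv {ι : Type*} [Preorder ι] (x : ι → E) (a : E) : Prop :=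
  ∃ S : Set E, S.Nonempty ∧ DirectedOn (· ≥ ·) S ∧ IsGLB S 0 ∧
    ∀ y ∈ S, ∃ α₀, ∀ α, α₀ ≤ α → |x α - a| ≤ y

/-- `A` is quasi-order closed: whenever a net in `A` increases to its supremum `a`
or decreases to its infimum `a`, then `a ∈ A`. -/
def QuasiOrderClosed (A : Set E) : Prop :=
  ∀ (ι : Type u) [Preorder ι] [Nonempty ι] [IsDirected ι (· ≤ ·)]
    (x : ι → E) (a : E), (∀ α, x α ∈ A) →
    ((Monotone x ∧ IsLUB (Set.range x) a) ∨ (Antitone x ∧ IsGLB (Set.range x) a)) →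
    a ∈ A

/-- `A` is order closed: it contains the limits of order convergent nets contained in it. -/
def OrderClosedSet (A : Set E) : Prop :=
  ∀ (ι : Type u) [Preorder ι] [Nonempty ι] [IsDirected ι (· ≤ ·)]
    (x : ι → E) (a : E), (∀ α, x α ∈ A) → OrderConv x a → a ∈ A

/-- `A` is solid. -/
def Solid (A : Set E) : Prop := ∀ x ∈ A, ∀ y : E, |y| ≤ |x| → y ∈ A

/-- Dedekind completeness: every nonempty set bounded above has a supremum. -/
def DedekindComplete (E : Type u) [Lattice E] : Prop :=
  ∀ A : Set E, A.Nonempty → BddAbove A → ∃ s, IsLUB A s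

/-- `ℓ^∞`, realized as the bounded (automatically continuous) functions `ℕ → ℝ`,
with the pointwise (coordinatewise) order. -/
noncomputable abbrev Linf : Type := BoundedContinuousFunction ℕ ℝ

/-- `e₁ = (1,0,0,…)`. -/
noncomputable def eOne : Linf :=
  BoundedContinuousFunction.ofNormedAddCommGroup (fun k => if k = 0 then 1 else 0)
    continuous_of_discreteTopology 1 (by intro k; by_cases h : k = 0 <;> simp [h])

/-- `xSeq n` has its first `n` coordinates equal to `0` and the rest equal to `1`. -/
noncomputable def xSeq (n : ℕ) : Linf :=
  BoundedContinuousFunction.ofNormedAddCommGroup (fun k => if k < n then 0 else 1)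
    continuous_of_discreteTopology 1 (by intro k; by_cases h : k < n <;> simp [h])

/-! Infima of decreasing sequences in `ℓ^∞` are computed coordinatewise, so `xSeq n` decreases
to `0` although each `xSeq n` still equals `1` at coordinate `n + 1`, where `eOne` vanishes.
Thus the complement of `(-eOne, eOne)` contains a decreasing sequence whose infimum `0` lies in
the interval. -/

open BoundedContinuousFunction

theorem BoundedContinuousFunction.le_iff_forall_apply_le {α β : Type*} [TopologicalSpace α]
    [NormedAddCommGroup β] [Lattice β] [HasSolidNorm β] [IsOrderedAddMonoid β] {f g : α →ᵇ β} :
    f ≤ g ↔ ∀ x, f x ≤ g x :=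
  Iff.rfl

theorem QuasiOrderClosed.isGLB_mem {α : Type u} [Lattice α] {A : Set α} (hA : QuasiOrderClosed A)
    {x : ℕ → α} {a : α} (hx : Antitone x) (ha : IsGLB (Set.range x) a) (hxA : ∀ n, x n ∈ A) :
    a ∈ A := by
  refine hA (ULift ℕ) (x ∘ ULift.down) a (fun n => hxA n.down) (Or.inr ⟨?_, ?_⟩)
  · exact hx.comp_monotone fun _ _ h => h
  · rwa [Set.range_comp, ULift.down_surjective.range_eq, Set.image_univ]

theorem xSeq_apply (n k : ℕ) : xSeq n k = if k < n then 0 else 1 := rfl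

theorem eOne_apply (k : ℕ) : eOne k = if k = 0 then 1 else 0 := rfl

theorem xSeq_antitone : Antitone xSeq := by
  intro m n hmn
  rw [le_iff_forall_apply_le]
  intro k
  simp only [xSeq_apply]
  split_ifs <;> first | omega | norm_num

theorem isGLB_range_xSeq : IsGLB (Set.range xSeq) 0 := by
  refine ⟨?_, fun b hb => le_iff_forall_apply_le.2 fun k => ?_⟩
  · rintro _ ⟨n, rfl⟩
    rw [le_iff_forall_apply_le]
    intro k
    simp only [xSeq_apply, coe_zero, Pi.zero_apply]
    split_ifs <;> norm_num
  · simpa [xSeq_apply] using le_iff_forall_apply_le.1 (hb ⟨k + 1, rfl⟩) k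

theorem eOne_pos : 0 < eOne := by
  refine lt_of_le_of_ne (le_iff_forall_apply_le.2 fun k => ?_) fun h => ?_
  · simp only [eOne_apply, coe_zero, Pi.zero_apply]
    split_ifs <;> norm_num
  · simpa [eOne_apply] using congrArg (· 0) h

theorem xSeq_not_le_eOne (n : ℕ) : ¬ xSeq n ≤ eOne := fun h => by
  have := le_iff_forall_apply_le.1 h (n + 1)
  norm_num [xSeq_apply, eOne_apply] at this

/-- in `ℓ^∞`, the sequence `xSeq` decreases with infimum `0`, yet
`xSeq n ∉ (-e₁, e₁)` for every `n`; hence the open order interval `(-e₁, e₁)`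
is not open in the quasi-order topology `τ_o`. -/
theorem interval_not_tauO_open :
    (Antitone xSeq ∧ IsGLB (Set.range xSeq) 0) ∧
    (∀ n : ℕ, xSeq n ∉ Set.Ioo (-eOne) eOne) ∧
    ¬ QuasiOrderClosed (Set.Ioo (-eOne) eOne)ᶜ := by
  have hx : ∀ n, xSeq n ∉ Set.Ioo (-eOne) eOne := fun n h => xSeq_not_le_eOne n h.2.le
  have h0 : (0 : Linf) ∈ Set.Ioo (-eOne) eOne := ⟨neg_neg_iff_pos.2 eOne_pos, eOne_pos⟩
  exact ⟨⟨xSeq_antitone, isGLB_range_xSeq⟩, hx,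
    fun hA => hA.isGLB_mem xSeq_antitone isGLB_range_xSeq hx h0⟩
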